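/- arXiv:2303.01562 — 4 statements merged into one kernel-verified Lean document; each statement's English description precedes it below -/
import Mathlib

section
/- For all t with 0 ≤ t ≤ π/2, we have exp(-t²/6 - t⁴/138) ≤ sin(t)/t ≤ exp(-t²/6), where sin(t)/t is interpreted as 1 at t = 0. -/
/-!
The Taylor polynomials of `sin` and of `x ↦ exp (-x)` bound these functions alternately from above
and below on `[0, ∞)`: each remainder vanishes at `0` and its derivative is, up to sign, a
remainder already known to have constant sign. With `u = t ^ 2`, the upper bound follows from
`sin t / t ≤ 1 - u/6 + u^2/120` and `exp (-u/6) ≥ 1 - u/6 + u^2/72 - u^3/1296`, the lower bound from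
`sin t / t ≥ 1 - u/6 + u^2/120 - u^3/5040` and the degree-four Taylor bound for `exp (-y)` at
`y = u/6 + u^2/138`, which reduces to a polynomial inequality in `u` on `[0, (π/2)^2]`.
-/

open Real Finset Nat

lemma nonneg_of_hasDerivAt_nonneg {F F' : ℝ → ℝ} (hF : ∀ x, HasDerivAt F (F' x) x)
    (h₀ : 0 ≤ F 0) (hF' : ∀ x, 0 ≤ x → 0 ≤ F' x) {x : ℝ} (hx : 0 ≤ x) : 0 ≤ F x := by
  refine h₀.trans <| monotoneOn_of_hasDerivWithinAt_nonneg (convex_Ici 0)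
    (fun y _ ↦ (hF y).continuousAt.continuousWithinAt) (fun y _ ↦ (hF y).hasDerivWithinAt)
    (fun y hy ↦ hF' y ?_) Set.self_mem_Ici hx hx
  rw [interior_Ici] at hy
  exact hy.le

noncomputable def sinTaylor (n : ℕ) (x : ℝ) : ℝ :=
  ∑ k ∈ range n, (-1) ^ k * x ^ (2 * k + 1) / (2 * k + 1)!

noncomputable def cosTaylor (n : ℕ) (x : ℝ) : ℝ :=
  ∑ k ∈ range n, (-1) ^ k * x ^ (2 * k) / (2 * k)!

noncomputable def expNegTaylor (n : ℕ) (x : ℝ) : ℝ :=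
  ∑ k ∈ range n, (-x) ^ k / k !

lemma hasDerivAt_sinTaylor (n : ℕ) (x : ℝ) :
    HasDerivAt (sinTaylor n) (cosTaylor n x) x := by
  refine (HasDerivAt.fun_sum fun k _ ↦
    ((hasDerivAt_pow (2 * k + 1) x).const_mul ((-1 : ℝ) ^ k)).div_const _).congr_deriv ?_
  refine sum_congr rfl fun k _ ↦ ?_
  rw [factorial_succ]
  push_cast
  field_simp

lemma hasDerivAt_cosTaylor_succ (n : ℕ) (x : ℝ) :
    HasDerivAt (cosTaylor (n + 1)) (-sinTaylor n x) x := by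
  refine (HasDerivAt.fun_sum fun k _ ↦
    ((hasDerivAt_pow (2 * k) x).const_mul ((-1 : ℝ) ^ k)).div_const _).congr_deriv ?_
  rw [sum_range_succ', sinTaylor, ← sum_neg_distrib]
  simp only [mul_zero, CharP.cast_eq_zero, zero_mul, zero_div, add_zero]
  refine sum_congr rfl fun k _ ↦ ?_
  rw [show 2 * (k + 1) = 2 * k + 1 + 1 by ring, factorial_succ, Nat.add_sub_cancel]
  push_cast
  field_simp
  ring

lemma hasDerivAt_expNegTaylor_succ (n : ℕ) (x : ℝ) :
    HasDerivAt (expNegTaylor (n + 1)) (-expNegTaylor n x) x := by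
  refine (HasDerivAt.fun_sum fun k _ ↦
    (((hasDerivAt_neg x).pow k).div_const _)).congr_deriv ?_
  rw [sum_range_succ', expNegTaylor, ← sum_neg_distrib]
  simp only [CharP.cast_eq_zero, zero_mul, zero_div, add_zero]
  refine sum_congr rfl fun k _ ↦ ?_
  rw [factorial_succ, Nat.add_sub_cancel]
  push_cast
  field_simp

lemma sin_sub_sinTaylor_alternating_of_cos {n : ℕ}
    (hcos : ∀ x, 0 ≤ x → 0 ≤ (-1) ^ n * (cos x - cosTaylor n x)) {x : ℝ} (hx : 0 ≤ x) :
    0 ≤ (-1) ^ n * (sin x - sinTaylor n x) :=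
  nonneg_of_hasDerivAt_nonneg
    (fun y ↦ (((hasDerivAt_sin y).sub (hasDerivAt_sinTaylor n y)).const_mul _))
    (by simp [sinTaylor]) hcos hx

lemma cos_sub_cosTaylor_alternating (n : ℕ) {x : ℝ} (hx : 0 ≤ x) :
    0 ≤ (-1) ^ (n + 1) * (cos x - cosTaylor (n + 1) x) := by
  induction n generalizing x with
  | zero => simpa [cosTaylor] using cos_le_one x
  | succ n ih =>
    refine nonneg_of_hasDerivAt_nonneg (fun y ↦
      (((hasDerivAt_cos y).sub (hasDerivAt_cosTaylor_succ (n + 1) y)).const_mul _))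
      (by simp [cosTaylor, sum_range_succ']) (fun y hy ↦ ?_) hx
    have := sin_sub_sinTaylor_alternating_of_cos (fun _ ↦ ih) hy
    rw [pow_succ]
    linarith

lemma sin_sub_sinTaylor_alternating (n : ℕ) {x : ℝ} (hx : 0 ≤ x) :
    0 ≤ (-1) ^ (n + 1) * (sin x - sinTaylor (n + 1) x) :=
  sin_sub_sinTaylor_alternating_of_cos (fun _ ↦ cos_sub_cosTaylor_alternating n) hx

lemma exp_neg_sub_expNegTaylor_alternating (n : ℕ) {x : ℝ} (hx : 0 ≤ x) :
    0 ≤ (-1) ^ n * (exp (-x) - expNegTaylor n x) := by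
  induction n generalizing x with
  | zero => simpa [expNegTaylor] using (exp_pos _).le
  | succ n ih =>
    refine nonneg_of_hasDerivAt_nonneg (fun y ↦
      ((((hasDerivAt_neg y).exp).sub (hasDerivAt_expNegTaylor_succ n y)).const_mul _))
      (by simp [expNegTaylor, sum_range_succ']) (fun y hy ↦ ?_) hx
    have := ih hy
    rw [pow_succ]
    linarith

lemma sin_le_taylor_five {x : ℝ} (hx : 0 ≤ x) : sin x ≤ x - x ^ 3 / 6 + x ^ 5 / 120 := by
  have := sin_sub_sinTaylor_alternating 2 hx
  norm_num [sinTaylor, sum_range_succ, factorial] at this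
  linarith

lemma taylor_seven_le_sin {x : ℝ} (hx : 0 ≤ x) :
    x - x ^ 3 / 6 + x ^ 5 / 120 - x ^ 7 / 5040 ≤ sin x := by
  have := sin_sub_sinTaylor_alternating 3 hx
  norm_num [sinTaylor, sum_range_succ, factorial] at this
  linarith

lemma taylor_three_le_exp_neg {x : ℝ} (hx : 0 ≤ x) :
    1 - x + x ^ 2 / 2 - x ^ 3 / 6 ≤ exp (-x) := by
  have := exp_neg_sub_expNegTaylor_alternating 4 hx
  norm_num [expNegTaylor, sum_range_succ, factorial] at this
  linarith

lemma exp_neg_le_taylor_four {x : ℝ} (hx : 0 ≤ x) :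
    exp (-x) ≤ 1 - x + x ^ 2 / 2 - x ^ 3 / 6 + x ^ 4 / 24 := by
  have := exp_neg_sub_expNegTaylor_alternating 5 hx
  norm_num [expNegTaylor, sum_range_succ, factorial] at this
  linarith

lemma sin_div_self_le_exp {t : ℝ} (ht : 0 < t) (ht₂ : t ^ 2 ≤ 36 / 5) :
    sin t / t ≤ exp (-t ^ 2 / 6) := by
  rw [div_le_iff₀ ht, neg_div]
  calc sin t ≤ t - t ^ 3 / 6 + t ^ 5 / 120 := sin_le_taylor_five ht.le
    _ ≤ (1 - t ^ 2 / 6 + (t ^ 2 / 6) ^ 2 / 2 - (t ^ 2 / 6) ^ 3 / 6) * t := by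
      nlinarith [pow_pos ht 5]
    _ ≤ exp (-(t ^ 2 / 6)) * t := by
      gcongr
      exact taylor_three_le_exp_neg (by positivity)

lemma exp_le_sin_div_self {t : ℝ} (ht : 0 < t) (ht₂ : t ^ 2 ≤ 5 / 2) :
    exp (-t ^ 2 / 6 - t ^ 4 / 138) ≤ sin t / t := by
  have hpoly : ∀ u : ℝ, 0 ≤ u → u ≤ 5 / 2 →
      1 - (u / 6 + u ^ 2 / 138) + (u / 6 + u ^ 2 / 138) ^ 2 / 2
        - (u / 6 + u ^ 2 / 138) ^ 3 / 6 + (u / 6 + u ^ 2 / 138) ^ 4 / 24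
        ≤ 1 - u / 6 + u ^ 2 / 120 - u ^ 3 / 5040 := fun u hu hu₂ ↦ by
    have h := sub_nonneg.2 hu₂
    nlinarith [mul_nonneg (mul_nonneg hu hu) h, mul_nonneg (pow_nonneg hu 3) h,
      mul_nonneg (pow_nonneg hu 4) h, mul_nonneg (pow_nonneg hu 5) h, mul_nonneg (pow_nonneg hu 6) h]
  rw [le_div_iff₀ ht, show -t ^ 2 / 6 - t ^ 4 / 138 = -(t ^ 2 / 6 + (t ^ 2) ^ 2 / 138) by ring]
  calc exp (-(t ^ 2 / 6 + (t ^ 2) ^ 2 / 138)) * t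
      ≤ (1 - t ^ 2 / 6 + (t ^ 2) ^ 2 / 120 - (t ^ 2) ^ 3 / 5040) * t := by
        gcongr
        exact (exp_neg_le_taylor_four (by positivity)).trans (hpoly _ (by positivity) ht₂)
    _ = t - t ^ 3 / 6 + t ^ 5 / 120 - t ^ 7 / 5040 := by ring
    _ ≤ sin t := taylor_seven_le_sin ht.le

theorem sinc_two_sided_bound (t : ℝ) (h0 : 0 ≤ t) (h1 : t ≤ π / 2) :
    Real.exp (-t ^ 2 / 6 - t ^ 4 / 138) ≤ (if t = 0 then 1 else Real.sin t / t) ∧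
    (if t = 0 then 1 else Real.sin t / t) ≤ Real.exp (-t ^ 2 / 6) := by
  rcases h0.eq_or_lt with rfl | ht
  · simp
  have ht₂ : t ^ 2 ≤ 5 / 2 := by nlinarith [pi_lt_d2]
  rw [if_neg ht.ne']
  exact ⟨exp_le_sin_div_self ht ht₂, sin_div_self_le_exp ht (by linarith)⟩
end

section
/- For all t with 0 ≤ t ≤ π/2, sin(t)/t ≤ exp(-t²/6), with sin(t)/t interpreted as 1 at t = 0. -/
/-!
Integrating `x - x ^ 3 / 6 ≤ sin x` twice gives `sin t ≤ t - t ^ 3 / 6 + t ^ 5 / 120` for `t ≥ 0`,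
so with `u = t ^ 2 / 6` we get `sin t / t ≤ 1 - u + 3 u ^ 2 / 10`. This is at most `(1 - u / 3) ^ 3`
as long as `u ≤ 9 / 10`, and `(1 - u / 3) ^ 3 ≤ exp (-u)`. On `[0, π / 2]` we have `u ≤ 2 / 3`.
-/

open Real Set

theorem le_of_hasDerivAt_le_of_le {f g f' g' : ℝ → ℝ} {a x : ℝ}
    (hf : ∀ y, HasDerivAt f (f' y) y) (hg : ∀ y, HasDerivAt g (g' y) y)
    (ha : f a ≤ g a) (hfg : ∀ y, a < y → f' y ≤ g' y) (hx : a ≤ x) : f x ≤ g x := by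
  have hmono : MonotoneOn (g - f) (Ici a) :=
    monotoneOn_of_hasDerivWithinAt_nonneg (convex_Ici a)
      (fun y _ => ((hg y).sub (hf y)).continuousAt.continuousWithinAt)
      (fun y _ => ((hg y).sub (hf y)).hasDerivWithinAt)
      (fun y hy => sub_nonneg.2 (hfg y (by rwa [interior_Ici] at hy)))
  have := hmono self_mem_Ici hx hx
  simp only [Pi.sub_apply] at this
  linarith

namespace Real

theorem cos_le_one_sub_sq_div_two_add_quartic {x : ℝ} (hx : 0 ≤ x) :
    cos x ≤ 1 - x ^ 2 / 2 + x ^ 4 / 24 := by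
  refine le_of_hasDerivAt_le_of_le (g := fun y => 1 - y ^ 2 / 2 + y ^ 4 / 24)
    (f' := fun y => -sin y) (g' := fun y => -y + y ^ 3 / 6)
    hasDerivAt_cos (fun y => ?_) (by norm_num) (fun y hy => ?_) hx
  · refine (((hasDerivAt_const y 1).sub ((hasDerivAt_pow 2 y).div_const 2)).add
      ((hasDerivAt_pow 4 y).div_const 24)).congr_deriv ?_
    norm_num
    ring
  · linarith [sin_ge_sub_cube hy.le]

theorem sin_le_sub_cube_add_quintic {x : ℝ} (hx : 0 ≤ x) :
    sin x ≤ x - x ^ 3 / 6 + x ^ 5 / 120 := by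
  refine le_of_hasDerivAt_le_of_le (g := fun y => y - y ^ 3 / 6 + y ^ 5 / 120)
    (g' := fun y => 1 - y ^ 2 / 2 + y ^ 4 / 24)
    hasDerivAt_sin (fun y => ?_) (by norm_num)
    (fun y hy => cos_le_one_sub_sq_div_two_add_quartic hy.le) hx
  refine (((hasDerivAt_id y).sub ((hasDerivAt_pow 3 y).div_const 6)).add
    ((hasDerivAt_pow 5 y).div_const 120)).congr_deriv ?_
  norm_num
  ring

theorem sin_div_le_one_sub_sq_div_six_add_quartic {x : ℝ} (hx : 0 < x) :
    sin x / x ≤ 1 - x ^ 2 / 6 + x ^ 4 / 120 := by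
  rw [div_le_iff₀ hx]
  linarith [sin_le_sub_cube_add_quintic hx.le]

theorem one_sub_add_sq_le_exp_neg {u : ℝ} (hu : u ≤ 9 / 10) :
    1 - u + 3 / 10 * u ^ 2 ≤ exp (-u) :=
  calc 1 - u + 3 / 10 * u ^ 2
      ≤ (1 - u / 3) ^ 3 := by nlinarith [mul_nonneg (sq_nonneg u) (sub_nonneg.2 hu)]
    _ ≤ exp (-u) := by
      simpa using one_sub_div_pow_le_exp_neg (n := 3) (t := u) (by norm_num; linarith)

end Real

theorem sinc_upper_bound (t : ℝ) (h0 : 0 ≤ t) (h1 : t ≤ π / 2) :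
    (if t = 0 then 1 else Real.sin t / t) ≤ Real.exp (-t ^ 2 / 6) := by
  rcases h0.eq_or_lt with rfl | ht
  · simp
  rw [if_neg ht.ne']
  have hu : t ^ 2 / 6 ≤ 9 / 10 := by nlinarith [pi_le_four]
  calc sin t / t
      ≤ 1 - t ^ 2 / 6 + 3 / 10 * (t ^ 2 / 6) ^ 2 := by
        linarith [sin_div_le_one_sub_sq_div_six_add_quartic ht]
    _ ≤ exp (-(t ^ 2 / 6)) := one_sub_add_sq_le_exp_neg hu
    _ = exp (-t ^ 2 / 6) := by rw [neg_div]
end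

section
/- The probability density function of the Irwin-Hall distribution X_n (sum of n i.i.d. Uniform(0,1) random variables) is f(x) = (1/(2(n−1)!)) ∑_{k=0}^{n} (−1)^k C(n,k) (x−k)^{n−1} sgn(x−k), for n ≥ 1. -/
/-!
`X_{n+1} = U + X_n` with `U` uniform on `[0, 1]` and independent of `X_n`, so the law of `X_{n+1}`
is the convolution of the uniform law with that of `X_n`, and its density is
`f_{n+1}(x) = ∫_{x-1}^{x} f_n`. The claimed density propagates along this recursion: each
`(y - k)^m sign (y - k)` has antiderivative `(y - k)^(m+1) sign (y - k) / (m + 1)` (continuous,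
and differentiable off `k`), and Pascal's rule turns the differences at `x - k` and `x - k - 1`
into the alternating binomial sum of the next order. For `n = 1` the formula is
`(sign x - sign (x - 1)) / 2`, the uniform density away from `0` and `1`.
-/

open Real MeasureTheory

/-- Law of the Irwin-Hall variable `X_n`, the sum of `n` i.i.d. Uniform(0,1) variables. -/
noncomputable def irwinHallLaw (n : ℕ) : Measure ℝ :=
  Measure.map (fun u : Fin n → ℝ => ∑ i, u i)
    (Measure.pi fun _ : Fin n => volume.restrict (Set.Icc (0 : ℝ) 1))

namespace Real

theorem monotone_sign : Monotone Real.sign := by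
  intro x y hxy
  unfold Real.sign
  split_ifs <;> linarith

@[fun_prop]
theorem measurable_sign : Measurable Real.sign :=
  monotone_sign.measurable

theorem hasDerivAt_sign {x : ℝ} (hx : x ≠ 0) : HasDerivAt Real.sign 0 x := by
  rcases hx.lt_or_gt with hx | hx
  · exact (hasDerivAt_const x (-1)).congr_of_eventuallyEq <|
      (eventually_lt_nhds hx).mono fun y hy => sign_of_neg hy
  · exact (hasDerivAt_const x 1).congr_of_eventuallyEq <|
      (eventually_gt_nhds hx).mono fun y hy => sign_of_pos hy

theorem pow_succ_mul_sign (m : ℕ) (x : ℝ) : x ^ (m + 1) * Real.sign x = |x| * x ^ m := by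
  rcases lt_trichotomy x 0 with hx | rfl | hx
  · rw [sign_of_neg hx, abs_of_neg hx]; ring
  · simp
  · rw [sign_of_pos hx, abs_of_pos hx]; ring

theorem continuous_pow_succ_mul_sign (m : ℕ) :
    Continuous fun x : ℝ => x ^ (m + 1) * Real.sign x := by
  simp_rw [pow_succ_mul_sign]
  fun_prop

theorem hasDerivAt_pow_succ_mul_sign (m : ℕ) {x : ℝ} (hx : x ≠ 0) :
    HasDerivAt (fun y => y ^ (m + 1) * Real.sign y) ((m + 1) * (x ^ m * Real.sign x)) x :=
  ((hasDerivAt_pow (m + 1) x).fun_mul (hasDerivAt_sign hx)).congr_deriv (by simp; ring)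

theorem intervalIntegrable_pow_mul_sign (m : ℕ) (a b : ℝ) :
    IntervalIntegrable (fun x => x ^ m * Real.sign x) volume a b :=
  monotone_sign.intervalIntegrable.continuousOn_mul (continuous_pow m).continuousOn

theorem integral_pow_mul_sign (m : ℕ) (a b : ℝ) :
    ∫ x in a..b, x ^ m * Real.sign x =
      (b ^ (m + 1) * Real.sign b - a ^ (m + 1) * Real.sign a) / (m + 1) := by
  have h := integral_eq_of_hasDerivAt_off_countable _ _ (Set.countable_singleton 0)
    (continuous_pow_succ_mul_sign m).continuousOn
    (fun x hx => hasDerivAt_pow_succ_mul_sign m hx.2)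
    ((intervalIntegrable_pow_mul_sign m a b).const_mul (m + 1))
  rw [intervalIntegral.integral_const_mul] at h
  rw [eq_div_iff (by positivity), mul_comm, h]

end Real

theorem intervalIntegrable_mul_pow_sub_mul_sign (c k : ℝ) (m : ℕ) (a b : ℝ) :
    IntervalIntegrable (fun y => c * (y - k) ^ m * Real.sign (y - k)) volume a b := by
  have h := (Real.intervalIntegrable_pow_mul_sign m (a - k) (b - k)).comp_sub_right k
  rw [sub_add_cancel, sub_add_cancel] at h
  simpa only [mul_assoc] using h.const_mul c

theorem integral_mul_pow_sub_mul_sign (c k : ℝ) (m : ℕ) (a b : ℝ) :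
    ∫ y in a..b, c * (y - k) ^ m * Real.sign (y - k) =
      c * (((b - k) ^ (m + 1) * Real.sign (b - k) - (a - k) ^ (m + 1) * Real.sign (a - k)) /
        (m + 1)) := by
  simp_rw [mul_assoc]
  rw [intervalIntegral.integral_const_mul,
    intervalIntegral.integral_comp_sub_right (fun y => y ^ m * Real.sign y),
    Real.integral_pow_mul_sign]

theorem sum_range_alternating_choose_succ_mul {R : Type*} [CommRing R] (n : ℕ) (T : ℕ → R) :
    ∑ k ∈ Finset.range (n + 2), (-1) ^ k * ((n + 1).choose k : R) * T k =
      ∑ k ∈ Finset.range (n + 1), (-1) ^ k * (n.choose k : R) * (T k - T (k + 1)) := by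
  have htop : ∑ k ∈ Finset.range (n + 1), (-1) ^ k * (n.choose k : R) * T k =
      ∑ k ∈ Finset.range (n + 2), (-1) ^ k * (n.choose k : R) * T k := by
    simp [Finset.sum_range_succ _ (n + 1)]
  simp only [mul_sub, Finset.sum_sub_distrib]
  rw [htop, Finset.sum_range_succ', Finset.sum_range_succ' _ (n + 1), add_sub_right_comm,
    ← Finset.sum_sub_distrib]
  congr 1
  · refine Finset.sum_congr rfl fun k _ => ?_
    rw [Nat.choose_succ_succ]
    push_cast
    ring
  · simp

theorem restrict_conv_withDensity {s : Set ℝ} (hs : MeasurableSet s) {g : ℝ → ENNReal}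
    (hg : Measurable g) :
    volume.restrict s ∗ volume.withDensity g =
      volume.withDensity fun x => ∫⁻ y in s, g (x - y) := by
  conv_lhs => rw [← withDensity_indicator_one hs, conv_withDensity_eq_lconvolution
    (measurable_one.indicator hs) hg]
  congr 1
  funext x
  rw [lconvolution_def, ← lintegral_indicator hs]
  congr 1 with y
  by_cases hy : y ∈ s <;> simp [hy, neg_add_eq_sub]

theorem lintegral_Icc_ofReal_comp_sub {f : ℝ → ℝ} (hf₀ : ∀ y, 0 ≤ f y) {a b : ℝ} (hab : a ≤ b)
    (x : ℝ) (hf : IntervalIntegrable f volume (x - b) (x - a)) :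
    ∫⁻ y in Set.Icc a b, ENNReal.ofReal (f (x - y)) =
      ENNReal.ofReal (∫ y in (x - b)..(x - a), f y) := by
  rw [← intervalIntegral.integral_comp_sub_left, intervalIntegral.integral_of_le hab,
    ← integral_Icc_eq_integral_Ioc, ofReal_integral_eq_lintegral_ofReal]
  · have h := hf.comp_sub_left x
    rw [sub_sub_cancel, sub_sub_cancel] at h
    exact (intervalIntegrable_iff_integrableOn_Icc_of_le hab).mp h.symm
  · exact .of_forall fun y => hf₀ _

theorem irwinHallLaw_zero : irwinHallLaw 0 = Measure.dirac 0 := by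
  simp [irwinHallLaw]

theorem irwinHallLaw_succ (n : ℕ) :
    irwinHallLaw (n + 1) = volume.restrict (Set.Icc (0 : ℝ) 1) ∗ irwinHallLaw n := by
  set μ := volume.restrict (Set.Icc (0 : ℝ) 1)
  have hsplit : (fun u : Fin (n + 1) → ℝ => ∑ i, u i) =
      (fun p : ℝ × ℝ => p.1 + p.2) ∘ (Prod.map id fun v : Fin n → ℝ => ∑ i, v i) ∘
        MeasurableEquiv.piFinSuccAbove (fun _ => ℝ) 0 := by
    funext u
    simp [MeasurableEquiv.piFinSuccAbove, Fin.sum_univ_succ, Fin.tail]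
  rw [irwinHallLaw, Measure.conv, irwinHallLaw, hsplit,
    ← Measure.map_map (by fun_prop) (by fun_prop),
    ← Measure.map_map (by fun_prop) (MeasurableEquiv.measurable _),
    (measurePreserving_piFinSuccAbove (fun _ => μ) 0).map_eq,
    ← Measure.map_prod_map _ _ measurable_id (by fun_prop), Measure.map_id]

noncomputable def irwinHallDensity (n : ℕ) (x : ℝ) : ℝ :=
  (1 / (2 * (Nat.factorial (n - 1) : ℝ))) *
    ∑ k ∈ Finset.range (n + 1),
      (-1 : ℝ) ^ k * (n.choose k : ℝ) * (x - k) ^ (n - 1) * Real.sign (x - k)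

@[fun_prop]
theorem measurable_irwinHallDensity (n : ℕ) : Measurable (irwinHallDensity n) := by
  unfold irwinHallDensity
  fun_prop

theorem intervalIntegrable_irwinHallDensity (n : ℕ) (a b : ℝ) :
    IntervalIntegrable (irwinHallDensity n) volume a b := by
  refine IntervalIntegrable.const_mul ?_ _
  have h := IntervalIntegrable.sum (Finset.range (n + 1)) fun k _ =>
    intervalIntegrable_mul_pow_sub_mul_sign ((-1) ^ k * n.choose k) k (n - 1) a b
  rwa [Finset.sum_fn] at h

theorem irwinHallDensity_succ {n : ℕ} (hn : 1 ≤ n) (x : ℝ) :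
    irwinHallDensity (n + 1) x = ∫ y in (x - 1)..x, irwinHallDensity n y := by
  symm
  obtain ⟨m, rfl⟩ := Nat.exists_eq_add_of_le' hn
  set T : ℕ → ℝ := fun k => (x - k) ^ (m + 1) * Real.sign (x - k)
  have hshift (k : ℕ) : x - 1 - k = x - ((k + 1 : ℕ) : ℝ) := by push_cast; ring
  unfold irwinHallDensity
  rw [intervalIntegral.integral_const_mul, intervalIntegral.integral_finsetSum fun k _ =>
    intervalIntegrable_mul_pow_sub_mul_sign _ _ _ _ _]
  have hrhs : ∑ k ∈ Finset.range (m + 1 + 1 + 1),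
      (-1 : ℝ) ^ k * ((m + 1 + 1).choose k : ℝ) * (x - k) ^ (m + 1) * Real.sign (x - k) =
      ∑ k ∈ Finset.range (m + 1 + 1), (-1) ^ k * ((m + 1).choose k : ℝ) * (T k - T (k + 1)) := by
    rw [← sum_range_alternating_choose_succ_mul]
    exact Finset.sum_congr rfl fun _ _ => mul_assoc _ _ _
  simp_rw [integral_mul_pow_sub_mul_sign, Nat.add_sub_cancel, hshift, hrhs, Finset.mul_sum]
  refine Finset.sum_congr rfl fun k _ => ?_
  rw [Nat.factorial_succ]
  simp only [T]
  push_cast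
  field_simp

theorem irwinHallDensity_one (x : ℝ) :
    irwinHallDensity 1 x = (Real.sign x - Real.sign (x - 1)) / 2 := by
  simp [irwinHallDensity, Finset.sum_range_succ, sub_eq_add_neg, div_eq_inv_mul]

theorem irwinHallDensity_nonneg {n : ℕ} (hn : 1 ≤ n) (x : ℝ) : 0 ≤ irwinHallDensity n x := by
  induction n, hn using Nat.le_induction generalizing x with
  | base =>
    rw [irwinHallDensity_one]
    linarith [Real.monotone_sign (sub_le_self x zero_le_one)]
  | succ n hn ih =>
    rw [irwinHallDensity_succ hn]
    exact intervalIntegral.integral_nonneg (by linarith) fun y _ => ih y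

theorem irwinHallDensity_one_eq_indicator {x : ℝ} (h0 : x ≠ 0) (h1 : x ≠ 1) :
    irwinHallDensity 1 x = (Set.Icc 0 1).indicator 1 x := by
  rw [irwinHallDensity_one]
  rcases h0.lt_or_gt with hx | hx
  · rw [Set.indicator_of_notMem (fun h => hx.not_ge h.1), Real.sign_of_neg hx,
      Real.sign_of_neg (by linarith)]
    norm_num
  rcases h1.lt_or_gt with hx' | hx'
  · rw [Set.indicator_of_mem (show x ∈ Set.Icc (0 : ℝ) 1 from ⟨hx.le, hx'.le⟩),
      Real.sign_of_pos hx, Real.sign_of_neg (by linarith)]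
    norm_num
  · rw [Set.indicator_of_notMem (fun h => hx'.not_ge h.2), Real.sign_of_pos hx,
      Real.sign_of_pos (by linarith)]
    norm_num

theorem restrict_Icc_zero_one_eq_withDensity_irwinHallDensity :
    volume.restrict (Set.Icc (0 : ℝ) 1) =
      volume.withDensity fun x => ENNReal.ofReal (irwinHallDensity 1 x) := by
  rw [← withDensity_indicator_one measurableSet_Icc]
  refine withDensity_congr_ae ?_
  have hnull : volume ({0, 1} : Set ℝ) = 0 := (Set.toFinite _).measure_zero volume
  filter_upwards [measure_eq_zero_iff_ae_notMem.mp hnull] with x hx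
  simp only [Set.mem_insert_iff, Set.mem_singleton_iff, not_or] at hx
  rw [irwinHallDensity_one_eq_indicator hx.1 hx.2]
  by_cases h : x ∈ Set.Icc (0 : ℝ) 1 <;> simp [h]

theorem irwinHall_density (n : ℕ) (hn : 1 ≤ n) :
    irwinHallLaw n =
      volume.withDensity fun x : ℝ =>
        ENNReal.ofReal
          ((1 / (2 * (Nat.factorial (n - 1) : ℝ))) *
            ∑ k ∈ Finset.range (n + 1),
              (-1 : ℝ) ^ k * (n.choose k : ℝ) * (x - k) ^ (n - 1) * Real.sign (x - k)) := by
  change irwinHallLaw n = volume.withDensity fun x => ENNReal.ofReal (irwinHallDensity n x)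
  induction n, hn using Nat.le_induction with
  | base =>
    rw [irwinHallLaw_succ, irwinHallLaw_zero, Measure.conv_dirac_zero,
      restrict_Icc_zero_one_eq_withDensity_irwinHallDensity]
  | succ n hn ih =>
    rw [irwinHallLaw_succ, ih, restrict_conv_withDensity measurableSet_Icc (by fun_prop)]
    congr 1 with x
    rw [lintegral_Icc_ofReal_comp_sub (irwinHallDensity_nonneg hn) zero_le_one x
      (intervalIntegrable_irwinHallDensity n _ _), sub_zero, ← irwinHallDensity_succ hn]
end

section
/- Every real orthogonal 4×4 matrix U with det(U) = 1 acting on two qubits can be implemented by a quantum circuit using at most 2 CNOT gates together with single-qubit unitary gates; equivalently, U = (A₁ ⊗ A₂)·CNOT·(B₁ ⊗ B₂ )·CNOT·(C₁ ⊗ C₂) for some single-qubit unitaries A_i, B_i, C_i. -/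
open Matrix Kronecker

/-- Tensor (Kronecker) product of two single-qubit gates as a two-qubit gate. -/
noncomputable def kron2 (A B : Matrix (Fin 2) (Fin 2) ℂ) : Matrix (Fin 4) (Fin 4) ℂ :=
  Matrix.reindex finProdFinEquiv finProdFinEquiv (A ⊗ₖ B)

/-- The CNOT gate. -/
def CNOT : Matrix (Fin 4) (Fin 4) ℂ :=
  !![1, 0, 0, 0; 0, 1, 0, 0; 0, 0, 0, 1; 0, 0, 1, 0]

/-!
Identify `ℝ⁴` with the quaternions `ℍ`. Every `U ∈ SO(4)` is `x ↦ a * x * b` for unit quaternions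
`a`, `b`: with `p = U 1`, the map `p⁻¹ U` fixes `1`, so it is a rotation of the imaginary
quaternions; conjugating by a unit quaternion that carries its image of `i` back to `i` leaves a
rotation of the `(j, k)`-plane by some `w ∈ ℂ`, which is conjugation by `z ∈ ℂ ⊆ ℍ` with `z² = w`.

In the magic basis, left multiplication by `a` becomes `1 ⊗ A` and right multiplication by `b`
becomes `B ⊗ 1` with `A, B ∈ SU(2)`. The magic basis change is `CNOT * (G₁ ⊗ G₂)`, so
`U = (G₁ ⊗ G₂)ᴴ * CNOT * (B ⊗ A) * CNOT * (G₁ ⊗ G₂)`.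
-/

open Quaternion ComplexConjugate

namespace Matrix

variable {n R : Type*} [Fintype n] [DecidableEq n] [CommRing R] {A : Matrix n n R}

lemma mulVec_dotProduct_mulVec (hA : A ∈ orthogonalGroup n R) (v w : n → R) :
    A *ᵥ v ⬝ᵥ A *ᵥ w = v ⬝ᵥ w := by
  rw [dotProduct_mulVec, ← vecMul_transpose, vecMul_vecMul, (mem_orthogonalGroup_iff' _ _).mp hA,
    vecMul_one]

lemma transpose_mulVec_eq_self (hA : A ∈ orthogonalGroup n R) {v : n → R} (hv : A *ᵥ v = v) :
    Aᵀ *ᵥ v = v := by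
  conv_lhs => rw [← hv, mulVec_mulVec, (mem_orthogonalGroup_iff' _ _).mp hA, one_mulVec]

end Matrix

lemma exists_half_angle {a b : ℝ} (h : a ^ 2 + b ^ 2 = 1) :
    ∃ x y : ℝ, x ^ 2 + y ^ 2 = 1 ∧ x ^ 2 - y ^ 2 = a ∧ 2 * x * y = b := by
  obtain ⟨z, hz⟩ := IsAlgClosed.exists_eq_mul_self (⟨a, b⟩ : ℂ)
  have ha : a = z.re * z.re - z.im * z.im := by simpa using congrArg Complex.re hz
  have hb : b = z.re * z.im + z.im * z.re := by simpa using congrArg Complex.im hz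
  refine ⟨z.re, z.im, ?_, by rw [ha]; ring, by rw [hb]; ring⟩
  have : (z.re ^ 2 + z.im ^ 2) ^ 2 = 1 := by rw [← h, ha, hb]; ring
  exact (pow_eq_one_iff_of_nonneg (by positivity) two_ne_zero).mp this

namespace Quaternion

local notation "vec" => Quaternion.equivTuple ℝ

local notation "𝐢" => ((Complex.I : ℂ) : ℍ[ℝ])

lemma mem_unitary_iff_normSq_eq_one {a : ℍ[ℝ]} : a ∈ unitary ℍ[ℝ] ↔ normSq a = 1 := by
  rw [Unitary.mem_iff, star_mul_self, self_mul_star, and_self, ← coe_one, coe_inj]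

lemma exists_mem_unitary_mul_mul_star_eq {u v w : ℍ[ℝ]} (hv : v ≠ 0)
    (h : v * u * star v = v * star v * w) : ∃ q ∈ unitary ℍ[ℝ], q * u * star q = w := by
  set c := (√(normSq v))⁻¹
  have hc : c ^ 2 * normSq v = 1 := by
    rw [inv_pow, Real.sq_sqrt normSq_nonneg, inv_mul_cancel₀ (normSq_ne_zero.mpr hv)]
  refine ⟨c • v, mem_unitary_iff_normSq_eq_one.mpr (by rw [normSq_smul, hc]), ?_⟩
  rw [Quaternion.star_smul, smul_mul_assoc, smul_mul_assoc, mul_smul_comm, h, self_mul_star,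
    coe_mul_eq_smul, smul_smul, smul_smul, ← sq, hc, one_smul]

lemma exists_mem_unitary_mul_mul_star_eq_i {u : ℍ[ℝ]} (hre : u.re = 0) (hu : normSq u = 1) :
    ∃ q ∈ unitary ℍ[ℝ], q * u * star q = 𝐢 := by
  rw [normSq_def', hre] at hu
  -- `1 - i u` turns `u` halfway towards `i`; it vanishes only at `u = -i`, which `j` turns to `i`.
  by_cases h : u.imI = -1
  · have hJ : u.imJ = 0 := by nlinarith
    have hK : u.imK = 0 := by nlinarith
    refine exists_mem_unitary_mul_mul_star_eq (v := (equivTuple ℝ).symm ![0, 0, 1, 0]) ?_ ?_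
    · intro h0
      simpa using congrArg (·.imJ) h0
    · ext <;>
        simp only [re_mul, imI_mul, imJ_mul, imK_mul, re_star, imI_star, imJ_star, imK_star] <;>
        simp [hre, h, hJ, hK]
  · refine exists_mem_unitary_mul_mul_star_eq (v := 1 - 𝐢 * u) ?_ ?_
    · intro h0
      have h0re : 1 + u.imI = 0 := by simpa using congrArg (·.re) h0
      exact h (by linarith)
    · ext <;> simp [hre]
      · ring
      · linear_combination (1 + u.imI) * hu
      · linear_combination -u.imJ * hu
      · linear_combination -u.imK * hu

def lmulMatrix (a : ℍ[ℝ]) : Matrix (Fin 4) (Fin 4) ℝ :=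
  !![a.re, -a.imI, -a.imJ, -a.imK;
     a.imI,  a.re, -a.imK,  a.imJ;
     a.imJ,  a.imK,  a.re, -a.imI;
     a.imK, -a.imJ,  a.imI,  a.re]

def rmulMatrix (b : ℍ[ℝ]) : Matrix (Fin 4) (Fin 4) ℝ :=
  !![b.re, -b.imI, -b.imJ, -b.imK;
     b.imI,  b.re,  b.imK, -b.imJ;
     b.imJ, -b.imK,  b.re,  b.imI;
     b.imK,  b.imJ, -b.imI,  b.re]

def conjMatrix (q : ℍ[ℝ]) : Matrix (Fin 4) (Fin 4) ℝ := lmulMatrix q * rmulMatrix (star q)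

lemma lmulMatrix_mulVec (a x : ℍ[ℝ]) : lmulMatrix a *ᵥ vec x = vec (a * x) := by
  ext i; fin_cases i <;> simp [lmulMatrix, mulVec, dotProduct, Fin.sum_univ_four] <;> ring

lemma rmulMatrix_mulVec (b x : ℍ[ℝ]) : rmulMatrix b *ᵥ vec x = vec (x * b) := by
  ext i; fin_cases i <;> simp [rmulMatrix, mulVec, dotProduct, Fin.sum_univ_four] <;> ring

lemma conjMatrix_mulVec (q x : ℍ[ℝ]) : conjMatrix q *ᵥ vec x = vec (q * x * star q) := by
  rw [conjMatrix, ← mulVec_mulVec, rmulMatrix_mulVec, lmulMatrix_mulVec, mul_assoc]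

lemma vec_dotProduct_vec (x y : ℍ[ℝ]) : vec x ⬝ᵥ vec y = (x * star y).re := by
  simp [dotProduct, Fin.sum_univ_four]

lemma matrix_ext_of_mulVec_vec {A B : Matrix (Fin 4) (Fin 4) ℝ}
    (h : ∀ x, A *ᵥ vec x = B *ᵥ vec x) : A = B := by
  refine ext_of_mulVec_single fun i => ?_
  simpa only [Equiv.apply_symm_apply] using h ((equivTuple ℝ).symm (Pi.single i 1))

lemma lmulMatrix_mul (a b : ℍ[ℝ]) : lmulMatrix (a * b) = lmulMatrix a * lmulMatrix b :=
  matrix_ext_of_mulVec_vec fun x => by simp only [← mulVec_mulVec, lmulMatrix_mulVec, mul_assoc]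

lemma rmulMatrix_mul (a b : ℍ[ℝ]) : rmulMatrix (a * b) = rmulMatrix b * rmulMatrix a :=
  matrix_ext_of_mulVec_vec fun x => by simp only [← mulVec_mulVec, rmulMatrix_mulVec, mul_assoc]

lemma conjMatrix_mul (p q : ℍ[ℝ]) : conjMatrix (p * q) = conjMatrix p * conjMatrix q :=
  matrix_ext_of_mulVec_vec fun x => by
    simp only [← mulVec_mulVec, conjMatrix_mulVec, star_mul, mul_assoc]

lemma lmulMatrix_one : lmulMatrix 1 = 1 :=
  matrix_ext_of_mulVec_vec fun x => by rw [lmulMatrix_mulVec, one_mul, one_mulVec]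

lemma rmulMatrix_one : rmulMatrix 1 = 1 :=
  matrix_ext_of_mulVec_vec fun x => by rw [rmulMatrix_mulVec, mul_one, one_mulVec]

lemma conjMatrix_one : conjMatrix 1 = 1 := by
  rw [conjMatrix, star_one, lmulMatrix_one, rmulMatrix_one, one_mul]

lemma transpose_lmulMatrix (a : ℍ[ℝ]) : (lmulMatrix a)ᵀ = lmulMatrix (star a) := by
  ext i j; fin_cases i <;> fin_cases j <;> simp [lmulMatrix]

lemma transpose_rmulMatrix (b : ℍ[ℝ]) : (rmulMatrix b)ᵀ = rmulMatrix (star b) := by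
  ext i j; fin_cases i <;> fin_cases j <;> simp [rmulMatrix]

lemma det_lmulMatrix (a : ℍ[ℝ]) : (lmulMatrix a).det = normSq a ^ 2 := by
  simp [lmulMatrix, det_succ_row_zero, Fin.sum_univ_succ, normSq_def', Fin.succAbove]
  ring

lemma det_rmulMatrix (b : ℍ[ℝ]) : (rmulMatrix b).det = normSq b ^ 2 := by
  simp [rmulMatrix, det_succ_row_zero, Fin.sum_univ_succ, normSq_def', Fin.succAbove]
  ring

lemma lmulMatrix_mem_specialOrthogonalGroup {a : ℍ[ℝ]} (ha : a ∈ unitary ℍ[ℝ]) :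
    lmulMatrix a ∈ specialOrthogonalGroup (Fin 4) ℝ := by
  refine mem_specialOrthogonalGroup_iff.mpr ⟨(mem_orthogonalGroup_iff _ _).mpr ?_, ?_⟩
  · rw [transpose_lmulMatrix, ← lmulMatrix_mul, Unitary.mul_star_self_of_mem ha, lmulMatrix_one]
  · rw [det_lmulMatrix, mem_unitary_iff_normSq_eq_one.mp ha, one_pow]

lemma rmulMatrix_mem_specialOrthogonalGroup {b : ℍ[ℝ]} (hb : b ∈ unitary ℍ[ℝ]) :
    rmulMatrix b ∈ specialOrthogonalGroup (Fin 4) ℝ := by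
  refine mem_specialOrthogonalGroup_iff.mpr ⟨(mem_orthogonalGroup_iff _ _).mpr ?_, ?_⟩
  · rw [transpose_rmulMatrix, ← rmulMatrix_mul, Unitary.star_mul_self_of_mem hb, rmulMatrix_one]
  · rw [det_rmulMatrix, mem_unitary_iff_normSq_eq_one.mp hb, one_pow]

lemma conjMatrix_mem_specialOrthogonalGroup {q : ℍ[ℝ]} (hq : q ∈ unitary ℍ[ℝ]) :
    conjMatrix q ∈ specialOrthogonalGroup (Fin 4) ℝ :=
  mul_mem (lmulMatrix_mem_specialOrthogonalGroup hq)
    (rmulMatrix_mem_specialOrthogonalGroup (Unitary.star_mem hq))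

lemma eq_of_mulVec_one_of_mulVec_i {W : Matrix (Fin 4) (Fin 4) ℝ}
    (hW : W ∈ orthogonalGroup (Fin 4) ℝ) (h1 : W *ᵥ vec 1 = vec 1) (hi : W *ᵥ vec 𝐢 = vec 𝐢) :
    W = !![1, 0, 0, 0; 0, 1, 0, 0; 0, 0, W 2 2, W 2 3; 0, 0, W 3 2, W 3 3] := by
  have h1' := transpose_mulVec_eq_self hW h1
  have hi' := transpose_mulVec_eq_self hW hi
  simp only [funext_iff, Fin.forall_fin_succ] at h1 hi h1' hi'
  simp [mulVec, dotProduct, Fin.sum_univ_four] at h1 hi h1' hi'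
  ext i j; fin_cases i <;> fin_cases j <;> simp [*]

lemma exists_eq_conjMatrix_of_mulVec_one_of_mulVec_i {W : Matrix (Fin 4) (Fin 4) ℝ}
    (hW : W ∈ specialOrthogonalGroup (Fin 4) ℝ) (h1 : W *ᵥ vec 1 = vec 1)
    (hi : W *ᵥ vec 𝐢 = vec 𝐢) : ∃ z ∈ unitary ℍ[ℝ], W = conjMatrix z := by
  obtain ⟨hO, hdet⟩ := mem_specialOrthogonalGroup_iff.mp hW
  have hblock := eq_of_mulVec_one_of_mulVec_i hO h1 hi
  have horth := (mem_orthogonalGroup_iff' _ _).mp hO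
  generalize W 2 2 = a, W 2 3 = c, W 3 2 = b, W 3 3 = d at hblock
  subst hblock
  have e22 := congrFun (congrFun horth 2) 2
  have e23 := congrFun (congrFun horth 2) 3
  simp only [Fin.isValue, mul_apply, transpose_apply, of_apply, cons_val', cons_val, cons_val_fin_one,
    Fin.sum_univ_four, cons_val_zero, mul_zero, cons_val_one, add_zero, zero_add, one_apply,
    ↓reduceIte, Fin.reduceEq] at e22 e23
  simp [det_succ_row_zero, Fin.sum_univ_succ] at hdet
  have hc : c = -b := by linear_combination a * e23 - b * hdet - c * e22
  have hd : d = a := by linear_combination b * e23 + a * hdet - d * e22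
  obtain ⟨x, y, hxy, rfl, rfl⟩ :=
    exists_half_angle (show a ^ 2 + b ^ 2 = 1 by linear_combination e22)
  subst hc hd
  refine ⟨((⟨x, y⟩ : ℂ) : ℍ[ℝ]), mem_unitary_iff_normSq_eq_one.mpr ?_, ?_⟩
  · simpa [normSq_def'] using hxy
  · ext i j
    fin_cases i <;> fin_cases j <;>
      simp [conjMatrix, lmulMatrix, rmulMatrix, mul_apply, Fin.sum_univ_four] <;>
      first | ring1 | linear_combination -hxy

lemma exists_eq_conjMatrix_of_mulVec_one {V : Matrix (Fin 4) (Fin 4) ℝ}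
    (hV : V ∈ specialOrthogonalGroup (Fin 4) ℝ) (h1 : V *ᵥ vec 1 = vec 1) :
    ∃ q ∈ unitary ℍ[ℝ], V = conjMatrix q := by
  have hO := (mem_specialOrthogonalGroup_iff.mp hV).1
  set u := (equivTuple ℝ).symm (V *ᵥ vec 𝐢)
  have hu : vec u = V *ᵥ vec 𝐢 := Equiv.apply_symm_apply _ _
  have hre : u.re = 0 := by
    have := mulVec_dotProduct_mulVec hO (vec 𝐢) (vec 1)
    rw [← hu, h1, vec_dotProduct_vec, vec_dotProduct_vec, star_one, mul_one, mul_one] at this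
    simpa using this
  have hnorm : normSq u = 1 := by
    have := mulVec_dotProduct_mulVec hO (vec 𝐢) (vec 𝐢)
    rw [← hu, vec_dotProduct_vec, vec_dotProduct_vec, ← normSq_def, ← normSq_def] at this
    simpa [normSq_def'] using this
  obtain ⟨q, hq, hqu⟩ := exists_mem_unitary_mul_mul_star_eq_i hre hnorm
  obtain ⟨z, hz, hW⟩ := exists_eq_conjMatrix_of_mulVec_one_of_mulVec_i
    (mul_mem (conjMatrix_mem_specialOrthogonalGroup hq) hV)
    (by rw [← mulVec_mulVec, h1, conjMatrix_mulVec, mul_one, Unitary.mul_star_self_of_mem hq])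
    (by rw [← mulVec_mulVec, ← hu, conjMatrix_mulVec, hqu])
  refine ⟨star q * z, mul_mem (Unitary.star_mem hq) hz, ?_⟩
  calc V = conjMatrix (star q * q) * V := by
        rw [Unitary.star_mul_self_of_mem hq, conjMatrix_one, one_mul]
    _ = conjMatrix (star q * z) := by rw [conjMatrix_mul, mul_assoc, hW, conjMatrix_mul]

theorem exists_eq_lmulMatrix_mul_rmulMatrix {U : Matrix (Fin 4) (Fin 4) ℝ}
    (hU : U ∈ specialOrthogonalGroup (Fin 4) ℝ) :
    ∃ a ∈ unitary ℍ[ℝ], ∃ b ∈ unitary ℍ[ℝ], U = lmulMatrix a * rmulMatrix b := by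
  have hO := (mem_specialOrthogonalGroup_iff.mp hU).1
  set p := (equivTuple ℝ).symm (U *ᵥ vec 1)
  have hp : vec p = U *ᵥ vec 1 := Equiv.apply_symm_apply _ _
  have hpu : p ∈ unitary ℍ[ℝ] := by
    have := mulVec_dotProduct_mulVec hO (vec 1) (vec 1)
    rw [← hp, vec_dotProduct_vec, vec_dotProduct_vec, ← normSq_def, ← normSq_def, map_one] at this
    exact mem_unitary_iff_normSq_eq_one.mpr this
  obtain ⟨q, hq, hV⟩ := exists_eq_conjMatrix_of_mulVec_one
    (mul_mem (lmulMatrix_mem_specialOrthogonalGroup (Unitary.star_mem hpu)) hU)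
    (by rw [← mulVec_mulVec, ← hp, lmulMatrix_mulVec, Unitary.star_mul_self_of_mem hpu])
  refine ⟨p * q, mul_mem hpu hq, star q, Unitary.star_mem hq, ?_⟩
  calc U = lmulMatrix (p * star p) * U := by
        rw [Unitary.mul_star_self_of_mem hpu, lmulMatrix_one, one_mul]
    _ = lmulMatrix (p * q) * rmulMatrix (star q) := by
        rw [lmulMatrix_mul, mul_assoc, hV, conjMatrix, ← mul_assoc, ← lmulMatrix_mul]

end Quaternion

/-- Every matrix in `U(2)` has this form; its determinant is `u`. -/
def u2Matrix (u z w : ℂ) : Matrix (Fin 2) (Fin 2) ℂ := !![z, w; -(u * conj w), u * conj z]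

lemma u2Matrix_mem_unitaryGroup {u z w : ℂ} (hu : Complex.normSq u = 1)
    (h : Complex.normSq z + Complex.normSq w = 1) : u2Matrix u z w ∈ unitaryGroup (Fin 2) ℂ := by
  have hu' : u * conj u = 1 := by rw [Complex.mul_conj, hu, Complex.ofReal_one]
  have h' : z * conj z + w * conj w = 1 := by
    rw [Complex.mul_conj, Complex.mul_conj]; exact_mod_cast h
  rw [mem_unitaryGroup_iff]
  ext i j
  fin_cases i <;> fin_cases j <;> simp [u2Matrix, mul_apply, Fin.sum_univ_two, one_apply] <;>
    first | ring1 | linear_combination h' | linear_combination (conj z * z + conj w * w) * hu' + h'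

lemma kron2_eq (A B : Matrix (Fin 2) (Fin 2) ℂ) :
    kron2 A B =
      !![A 0 0 * B 0 0, A 0 0 * B 0 1, A 0 1 * B 0 0, A 0 1 * B 0 1;
         A 0 0 * B 1 0, A 0 0 * B 1 1, A 0 1 * B 1 0, A 0 1 * B 1 1;
         A 1 0 * B 0 0, A 1 0 * B 0 1, A 1 1 * B 0 0, A 1 1 * B 0 1;
         A 1 0 * B 1 0, A 1 0 * B 1 1, A 1 1 * B 1 0, A 1 1 * B 1 1] := by
  ext i j
  fin_cases i <;> fin_cases j <;> rfl

lemma kron2_mul (A B C D : Matrix (Fin 2) (Fin 2) ℂ) :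
    kron2 A B * kron2 C D = kron2 (A * C) (B * D) := by
  rw [kron2, kron2, kron2, reindex_apply, reindex_apply, reindex_apply, submatrix_mul_equiv,
    mul_kronecker_mul]

lemma conjTranspose_kron2 (A B : Matrix (Fin 2) (Fin 2) ℂ) : (kron2 A B)ᴴ = kron2 Aᴴ Bᴴ := by
  rw [kron2, kron2, conjTranspose_reindex, conjTranspose_kronecker]

lemma kron2_one_one : kron2 1 1 = 1 := by
  rw [kron2, one_kronecker_one, reindex_apply, submatrix_one_equiv]

lemma kron2_mem_unitaryGroup {A B : Matrix (Fin 2) (Fin 2) ℂ} (hA : A ∈ unitaryGroup (Fin 2) ℂ)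
    (hB : B ∈ unitaryGroup (Fin 2) ℂ) : kron2 A B ∈ unitaryGroup (Fin 4) ℂ := by
  rw [mem_unitaryGroup_iff, star_eq_conjTranspose, conjTranspose_kron2, kron2_mul,
    ← star_eq_conjTranspose, ← star_eq_conjTranspose, mem_unitaryGroup_iff.mp hA,
    mem_unitaryGroup_iff.mp hB, kron2_one_one]

lemma conjTranspose_CNOT : CNOTᴴ = CNOT := by
  ext i j; fin_cases i <;> fin_cases j <;> simp [CNOT]

lemma CNOT_mem_unitaryGroup : CNOT ∈ unitaryGroup (Fin 4) ℂ := by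
  rw [mem_unitaryGroup_iff, star_eq_conjTranspose, conjTranspose_CNOT]
  ext i j; fin_cases i <;> fin_cases j <;> simp [CNOT, mul_apply, Fin.sum_univ_four, one_apply]

open Complex

/-- Its columns are maximally entangled states; in this basis `SO(4)` becomes `SU(2) ⊗ SU(2)`. -/
noncomputable def magicBasis : Matrix (Fin 4) (Fin 4) ℂ :=
  (1 / 2 : ℂ) • !![I, I, -1, -1; 1, -1, I, -I; I, -I, 1, -1; -1, -1, I, I]

noncomputable def magicGate₁ : Matrix (Fin 2) (Fin 2) ℂ := u2Matrix I ((1 + I) / 2) ((-1 + I) / 2)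

noncomputable def magicGate₂ : Matrix (Fin 2) (Fin 2) ℂ :=
  u2Matrix (-1) ((1 + I) / 2) ((1 + I) / 2)

lemma magicGate₁_mem_unitaryGroup : magicGate₁ ∈ unitaryGroup (Fin 2) ℂ :=
  u2Matrix_mem_unitaryGroup (by simp) (by simp [normSq_apply]; norm_num)

lemma magicGate₂_mem_unitaryGroup : magicGate₂ ∈ unitaryGroup (Fin 2) ℂ :=
  u2Matrix_mem_unitaryGroup (by simp) (by simp [normSq_apply]; norm_num)

lemma magicBasis_eq : magicBasis = CNOT * kron2 magicGate₁ magicGate₂ := by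
  rw [kron2_eq]
  ext i j
  fin_cases i <;> fin_cases j <;>
    simp [magicBasis, magicGate₁, magicGate₂, u2Matrix, CNOT, mul_apply, Fin.sum_univ_four,
      Complex.ext_iff, map_ofNat, div_ofNat_re, div_ofNat_im] <;>
    norm_num

lemma magicBasis_mem_unitaryGroup : magicBasis ∈ unitaryGroup (Fin 4) ℂ := by
  rw [magicBasis_eq]
  exact mul_mem CNOT_mem_unitaryGroup
    (kron2_mem_unitaryGroup magicGate₁_mem_unitaryGroup magicGate₂_mem_unitaryGroup)

namespace Quaternion

def lmulGate (a : ℍ[ℝ]) : Matrix (Fin 2) (Fin 2) ℂ := u2Matrix 1 ⟨a.re, a.imK⟩ ⟨-a.imJ, a.imI⟩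

def rmulGate (b : ℍ[ℝ]) : Matrix (Fin 2) (Fin 2) ℂ := u2Matrix 1 ⟨b.re, b.imJ⟩ ⟨b.imI, b.imK⟩

lemma lmulGate_mem_unitaryGroup {a : ℍ[ℝ]} (ha : a ∈ unitary ℍ[ℝ]) :
    lmulGate a ∈ unitaryGroup (Fin 2) ℂ := by
  have h := mem_unitary_iff_normSq_eq_one.mp ha
  rw [normSq_def'] at h
  refine u2Matrix_mem_unitaryGroup (by simp) ?_
  simp only [Complex.normSq_mk]
  linear_combination h

lemma rmulGate_mem_unitaryGroup {b : ℍ[ℝ]} (hb : b ∈ unitary ℍ[ℝ]) :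
    rmulGate b ∈ unitaryGroup (Fin 2) ℂ := by
  have h := mem_unitary_iff_normSq_eq_one.mp hb
  rw [normSq_def'] at h
  refine u2Matrix_mem_unitaryGroup (by simp) ?_
  simp only [Complex.normSq_mk]
  linear_combination h

lemma magicBasis_mul_lmulMatrix (a : ℍ[ℝ]) :
    magicBasis * (lmulMatrix a).map ofReal = kron2 1 (lmulGate a) * magicBasis := by
  rw [kron2_eq]
  ext i j
  fin_cases i <;> fin_cases j <;>
    simp [magicBasis, lmulGate, u2Matrix, lmulMatrix, mul_apply, Fin.sum_univ_four,
      Complex.ext_iff] <;>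
    constructor <;> ring

lemma magicBasis_mul_rmulMatrix (b : ℍ[ℝ]) :
    magicBasis * (rmulMatrix b).map ofReal = kron2 (rmulGate b) 1 * magicBasis := by
  rw [kron2_eq]
  ext i j
  fin_cases i <;> fin_cases j <;>
    simp [magicBasis, rmulGate, u2Matrix, rmulMatrix, mul_apply, Fin.sum_univ_four,
      Complex.ext_iff] <;>
    constructor <;> ring

lemma map_lmulMatrix_mul_rmulMatrix (a b : ℍ[ℝ]) :
    (lmulMatrix a * rmulMatrix b).map ofReal =
      magicBasisᴴ * kron2 (rmulGate b) (lmulGate a) * magicBasis := by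
  have hN : magicBasisᴴ * magicBasis = 1 := mem_unitaryGroup_iff'.mp magicBasis_mem_unitaryGroup
  have hmap : (lmulMatrix a * rmulMatrix b).map ofReal =
      (lmulMatrix a).map ofReal * (rmulMatrix b).map ofReal := Matrix.map_mul (f := ofRealHom)
  calc (lmulMatrix a * rmulMatrix b).map ofReal
      = magicBasisᴴ * magicBasis * ((lmulMatrix a).map ofReal * (rmulMatrix b).map ofReal) := by
        rw [hN, one_mul, hmap]
    _ = magicBasisᴴ * (kron2 1 (lmulGate a) * (magicBasis * (rmulMatrix b).map ofReal)) := by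
        rw [mul_assoc, ← mul_assoc magicBasis, magicBasis_mul_lmulMatrix, mul_assoc]
    _ = magicBasisᴴ * kron2 (rmulGate b) (lmulGate a) * magicBasis := by
        rw [magicBasis_mul_rmulMatrix, ← mul_assoc (kron2 _ _), kron2_mul, one_mul, mul_one,
          mul_assoc]

end Quaternion

theorem so4_two_cnot_decomposition (U : Matrix (Fin 4) (Fin 4) ℝ)
    (hU : U ∈ Matrix.orthogonalGroup (Fin 4) ℝ) (hdet : U.det = 1) :
    ∃ A₁ A₂ B₁ B₂ C₁ C₂ : Matrix (Fin 2) (Fin 2) ℂ,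
      A₁ ∈ Matrix.unitaryGroup (Fin 2) ℂ ∧ A₂ ∈ Matrix.unitaryGroup (Fin 2) ℂ ∧
      B₁ ∈ Matrix.unitaryGroup (Fin 2) ℂ ∧ B₂ ∈ Matrix.unitaryGroup (Fin 2) ℂ ∧
      C₁ ∈ Matrix.unitaryGroup (Fin 2) ℂ ∧ C₂ ∈ Matrix.unitaryGroup (Fin 2) ℂ ∧
      U.map (Complex.ofReal) =
        kron2 A₁ A₂ * CNOT * kron2 B₁ B₂ * CNOT * kron2 C₁ C₂ := by
  obtain ⟨a, ha, b, hb, rfl⟩ :=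
    exists_eq_lmulMatrix_mul_rmulMatrix (mem_specialOrthogonalGroup_iff.mpr ⟨hU, hdet⟩)
  refine ⟨magicGate₁ᴴ, magicGate₂ᴴ, rmulGate b, lmulGate a, magicGate₁, magicGate₂,
    Unitary.star_mem magicGate₁_mem_unitaryGroup, Unitary.star_mem magicGate₂_mem_unitaryGroup,
    rmulGate_mem_unitaryGroup hb, lmulGate_mem_unitaryGroup ha,
    magicGate₁_mem_unitaryGroup, magicGate₂_mem_unitaryGroup, ?_⟩
  rw [map_lmulMatrix_mul_rmulMatrix, magicBasis_eq, conjTranspose_mul, conjTranspose_kron2,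
    conjTranspose_CNOT]
  simp only [mul_assoc]
end
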